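/- arXiv:2602.08618 — 2 statements merged into one kernel-verified Lean document; each statement's English description precedes it below -/
import Mathlib

section
/- Let f : ℝ^n → ℝ be L-smooth convex for some L > 0, let r > 0, and let (x, z) be a solution of the NAG ODE with parameter r and initial point x₀. Define p(t) := (r(r+2)/t²)(x(t) − z(t)) (equivalently p(t) = −((r+2)/t)ẋ(t)) for t > 0. Then: (a) p(t) ∈ dom f* for all t > 0; (b) if p⋆ ∈ dom f* (i.e., dom f* has a minimum-norm point), then for all t > 0, ‖p(t) − p⋆‖² ≤ ‖p(t)‖² − ‖p⋆‖² ≤ 2(r+2)²·D_f(x₀, p⋆)/t². -/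
open scoped InnerProductSpace
open Filter Topology

/-- Legendre–Fenchel conjugate of `f`, valued in `ℝ ∪ {∞}` (modeled in `EReal`). -/
noncomputable def fconj {n : ℕ} (f : EuclideanSpace ℝ (Fin n) → ℝ)
    (p : EuclideanSpace ℝ (Fin n)) : EReal :=
  ⨆ x : EuclideanSpace ℝ (Fin n), ((⟪p, x⟫_ℝ - f x : ℝ) : EReal)

/-- Effective domain `dom f*` of the Legendre–Fenchel conjugate. -/
noncomputable def fconjDom {n : ℕ} (f : EuclideanSpace ℝ (Fin n) → ℝ) :
    Set (EuclideanSpace ℝ (Fin n)) := {p | fconj f p < ⊤}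

/-- Dual divergence `D_f(x, p) = f x + f*(p) − ⟨p, x⟩` (meaningful for `p ∈ dom f*`). -/
noncomputable def dualDiv {n : ℕ} (f : EuclideanSpace ℝ (Fin n) → ℝ)
    (x p : EuclideanSpace ℝ (Fin n)) : ℝ :=
  f x + (fconj f p).toReal - ⟪p, x⟫_ℝ

/-- `f` is `L`-smooth convex: convex, differentiable, with `L`-Lipschitz gradient. -/
def LSmoothConvex {n : ℕ} (L : ℝ) (f : EuclideanSpace ℝ (Fin n) → ℝ) : Prop :=
  ConvexOn ℝ Set.univ f ∧ Differentiable ℝ f ∧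
    LipschitzWith (Real.toNNReal L) (fun x => gradient f x)


lemma inner_gradient_eq {n : ℕ} {f : EuclideanSpace ℝ (Fin n) → ℝ}
    (c v : EuclideanSpace ℝ (Fin n)) :
    ⟪gradient f c, v⟫_ℝ = fderiv ℝ f c v :=
  InnerProductSpace.toDual_symm_apply

lemma hasDerivAt_line {n : ℕ} {f : EuclideanSpace ℝ (Fin n) → ℝ}
    (hd : Differentiable ℝ f) (a b : EuclideanSpace ℝ (Fin n)) (θ : ℝ) :
    HasDerivAt (fun θ : ℝ => f (a + θ • (b - a)))
      ⟪gradient f (a + θ • (b - a)), b - a⟫_ℝ θ := by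
  have hc : HasDerivAt (fun θ : ℝ => a + θ • (b - a)) (b - a) θ := by
    simpa using ((hasDerivAt_id θ).smul_const (b - a)).const_add a
  have := (hd (a + θ • (b - a))).hasFDerivAt.comp_hasDerivAt θ hc
  rw [inner_gradient_eq]
  exact this

lemma grad_ineq {n : ℕ} {f : EuclideanSpace ℝ (Fin n) → ℝ}
    (hc : ConvexOn ℝ Set.univ f) (hd : Differentiable ℝ f) (a b : EuclideanSpace ℝ (Fin n)) :
    f a + ⟪gradient f a, b - a⟫_ℝ ≤ f b := by
  set φ : ℝ → ℝ := fun θ => f (a + θ • (b - a)) with hφdef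
  have hφ : ConvexOn ℝ Set.univ φ := by
    have h1 := hc.comp_affineMap (AffineMap.lineMap a b : ℝ →ᵃ[ℝ] EuclideanSpace ℝ (Fin n))
    have : Set.univ = (AffineMap.lineMap a b : ℝ →ᵃ[ℝ] EuclideanSpace ℝ (Fin n)) ⁻¹' Set.univ := by
      simp
    rw [this]
    have e : φ = f ∘ (AffineMap.lineMap a b : ℝ →ᵃ[ℝ] EuclideanSpace ℝ (Fin n)) := by
      funext θ
      simp [φ, AffineMap.lineMap_apply, add_comm]
    rw [e]; exact h1
  have hkey := hasDerivAt_line hd a b 0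
  have hd0 : deriv φ 0 = ⟪gradient f a, b - a⟫_ℝ := by
    have := hkey.deriv
    simpa using this
  have hs := hφ.deriv_le_slope (Set.mem_univ 0) (Set.mem_univ 1) zero_lt_one
    (by simpa using hkey.differentiableAt)
  rw [hd0] at hs
  have hslope : slope φ 0 1 = f b - f a := by
    simp [slope_def_field, φ]
  rw [hslope] at hs
  linarith

lemma cont_rpow (r : ℝ) (hr : 0 < r) : Continuous (fun s : ℝ => s ^ r) := by
  apply continuous_iff_continuousAt.2
  intro s
  exact Real.continuousAt_rpow_const s r (Or.inr hr.le)

section main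
variable {n : ℕ} {f : EuclideanSpace ℝ (Fin n) → ℝ} {r : ℝ}
  {x z x' z' : ℝ → EuclideanSpace ℝ (Fin n)}

lemma hasDerivAt_F (hr : 0 < r)
    (hx : ∀ t ∈ Set.Ici (0 : ℝ), HasDerivWithinAt x (x' t) (Set.Ici 0) t)
    (hz : ∀ t ∈ Set.Ici (0 : ℝ), HasDerivWithinAt z (z' t) (Set.Ici 0) t)
    (hode1 : ∀ t > (0 : ℝ), x' t = (r / t) • (z t - x t))
    (hode2 : ∀ t > (0 : ℝ), z' t = -((t / r) • gradient f (x t)))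
    {s : ℝ} (hs : 0 < s) :
    HasDerivAt (fun s => (r * s ^ r) • (x s - z s))
      ((s ^ (r+1)) • gradient f (x s)) s := by
  have hmem : Set.Ici (0:ℝ) ∈ 𝓝 s := Ici_mem_nhds hs
  have hc : HasDerivAt (fun s : ℝ => r * s ^ r) (r * (r * s ^ (r-1))) s :=
    (Real.hasDerivAt_rpow_const (Or.inl hs.ne')).const_mul r
  have hv : HasDerivAt (fun s => x s - z s) (x' s - z' s) s :=
    (((hx s hs.le).sub (hz s hs.le)).hasDerivAt hmem)
  have key := hc.smul hv
  refine key.congr_deriv ?_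
  rw [hode1 s hs, hode2 s hs]
  have h1 : s ^ (r - 1) = s ^ r / s := by
    rw [Real.rpow_sub hs, Real.rpow_one]
  have h2 : s ^ (r + 1) = s ^ r * s := by
    rw [Real.rpow_add hs, Real.rpow_one]
  rw [h1, h2]
  match_scalars <;> field_simp <;> ring

lemma rep_integral (hgc : Continuous (fun y => gradient f y))
    (hr : 0 < r)
    (hx : ∀ t ∈ Set.Ici (0 : ℝ), HasDerivWithinAt x (x' t) (Set.Ici 0) t)
    (hz : ∀ t ∈ Set.Ici (0 : ℝ), HasDerivWithinAt z (z' t) (Set.Ici 0) t)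
    (hx0 : x 0 = z 0)
    (hode1 : ∀ t > (0 : ℝ), x' t = (r / t) • (z t - x t))
    (hode2 : ∀ t > (0 : ℝ), z' t = -((t / r) • gradient f (x t)))
    {t : ℝ} (ht : 0 < t) :
    (r * t ^ r) • (x t - z t) = ∫ s in (0:ℝ)..t, (s ^ (r+1)) • gradient f (x s) := by
  set I : ℝ → EuclideanSpace ℝ (Fin n) := fun s => (s ^ (r+1)) • gradient f (x s) with hIdef
  set F : ℝ → EuclideanSpace ℝ (Fin n) := fun s => (r * s ^ r) • (x s - z s) with hFdef
  have hxc : ContinuousOn x (Set.Ici 0) := fun s hs => (hx s hs).continuousWithinAt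
  have hzc : ContinuousOn z (Set.Ici 0) := fun s hs => (hz s hs).continuousWithinAt
  have hIcont : ContinuousOn I (Set.Ici 0) :=
    ((cont_rpow (r+1) (by linarith)).continuousOn).smul (hgc.comp_continuousOn hxc)
  have hsub : ∀ a b : ℝ, 0 ≤ a → 0 ≤ b → Set.uIcc a b ⊆ Set.Ici (0:ℝ) := by
    intro a b ha hb u hu
    rw [Set.uIcc_eq_union] at hu
    rcases hu with h | h
    · exact le_trans ha h.1
    · exact le_trans hb h.1
  have hint : ∀ a b : ℝ, 0 ≤ a → 0 ≤ b → IntervalIntegrable I MeasureTheory.volume a b := by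
    intro a b ha hb
    exact (hIcont.mono (hsub a b ha hb)).intervalIntegrable
  -- FTC on [a, t] for 0 < a ≤ t
  have hftc : ∀ a : ℝ, a ∈ Set.Ioc 0 t → F t - F a = ∫ s in a..t, I s := by
    intro a ⟨ha0, hat⟩
    rw [intervalIntegral.integral_eq_sub_of_hasDerivAt]
    · intro s hs
      have hs0 : 0 < s := by
        rcases Set.mem_uIcc.1 hs with h | h
        · exact lt_of_lt_of_le ha0 h.1
        · exact lt_of_lt_of_le ht h.1
      exact hasDerivAt_F hr hx hz hode1 hode2 hs0
    · exact hint a t ha0.le (by linarith)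
  -- split integral
  have hsplit : ∀ a : ℝ, a ∈ Set.Ioc 0 t →
      F t - (∫ s in (0:ℝ)..t, I s) = F a - ∫ s in (0:ℝ)..a, I s := by
    intro a ha
    have h1 : (∫ s in (0:ℝ)..a, I s) + (∫ s in a..t, I s) = ∫ s in (0:ℝ)..t, I s :=
      intervalIntegral.integral_add_adjacent_intervals (hint 0 a le_rfl ha.1.le)
        (hint a t ha.1.le (by linarith [ha.2]))
    have h2 := hftc a ha
    have h3 : F t = (∫ s in a..t, I s) + F a := sub_eq_iff_eq_add.mp h2
    rw [h3, ← h1]; abel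
  -- limits as a → 0⁺
  have hFlim : Tendsto F (𝓝[>] (0:ℝ)) (𝓝 0) := by
    have h1 : Tendsto (fun a : ℝ => r * a ^ r) (𝓝[>] (0:ℝ)) (𝓝 0) := by
      have h0 : Tendsto (fun a : ℝ => a ^ r) (𝓝[>] (0:ℝ)) (𝓝 ((0:ℝ) ^ r)) :=
        ((cont_rpow r hr).tendsto 0).mono_left nhdsWithin_le_nhds
      rw [Real.zero_rpow hr.ne'] at h0
      simpa using h0.const_mul r
    have h2 : Tendsto (fun a => x a - z a) (𝓝[>] (0:ℝ)) (𝓝 0) := by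
      have hx2 : Tendsto x (𝓝[>] (0:ℝ)) (𝓝 (x 0)) :=
        (hxc.continuousWithinAt Set.self_mem_Ici).mono_left
          (nhdsWithin_mono _ Set.Ioi_subset_Ici_self)
      have hz2 : Tendsto z (𝓝[>] (0:ℝ)) (𝓝 (z 0)) :=
        (hzc.continuousWithinAt Set.self_mem_Ici).mono_left
          (nhdsWithin_mono _ Set.Ioi_subset_Ici_self)
      have := hx2.sub hz2
      rw [hx0, sub_self] at this
      exact this
    simpa using h1.smul h2
  have hIlim : Tendsto (fun a => ∫ s in (0:ℝ)..a, I s) (𝓝[>] (0:ℝ)) (𝓝 0) := by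
    obtain ⟨C, hC⟩ := isCompact_Icc.exists_bound_of_continuousOn
      (hIcont.mono (Set.Icc_subset_Ici_self : Set.Icc (0:ℝ) t ⊆ _))
    apply squeeze_zero_norm'
    · filter_upwards [Ioc_mem_nhdsGT_of_mem (Set.mem_Ico.mpr ⟨le_rfl, ht⟩)] with a ha
      calc ‖∫ s in (0:ℝ)..a, I s‖ ≤ C * |a - 0| := by
            apply intervalIntegral.norm_integral_le_of_norm_le_const
            intro u hu
            rw [Set.uIoc_of_le ha.1.le] at hu
            exact hC u ⟨hu.1.le, le_trans hu.2 ha.2⟩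
        _ = C * |a| := by rw [sub_zero]
    · have : Tendsto (fun a : ℝ => C * |a|) (𝓝 (0:ℝ)) (𝓝 (C * |0|)) :=
        (continuous_const.mul continuous_abs).tendsto 0
      simpa using this.mono_left nhdsWithin_le_nhds
  have hconst : Tendsto (fun _ : ℝ => F t - ∫ s in (0:ℝ)..t, I s) (𝓝[>] (0:ℝ))
      (𝓝 (F t - ∫ s in (0:ℝ)..t, I s)) := tendsto_const_nhds
  have hvar : Tendsto (fun a : ℝ => F t - ∫ s in (0:ℝ)..t, I s) (𝓝[>] (0:ℝ)) (𝓝 0) := by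
    apply Tendsto.congr' _ (by simpa using hFlim.sub hIlim)
    filter_upwards [Ioc_mem_nhdsGT_of_mem (Set.mem_Ico.mpr ⟨le_rfl, ht⟩)] with a ha
    exact (hsplit a ha).symm
  have := tendsto_nhds_unique hconst hvar
  exact sub_eq_zero.mp this

end main
section partA
variable {n : ℕ} {f : EuclideanSpace ℝ (Fin n) → ℝ} {r : ℝ}
  {x z x' z' : ℝ → EuclideanSpace ℝ (Fin n)}


lemma mem_fconjDom_of_rep (hc : ConvexOn ℝ Set.univ f) (hd : Differentiable ℝ f)
    (hgc : Continuous (fun y => gradient f y))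
    (hxc : ContinuousOn x (Set.Ici 0)) (hr : 0 < r) {t : ℝ} (ht : 0 < t)
    (hrep : (r * t ^ r) • (x t - z t) = ∫ s in (0:ℝ)..t, (s ^ (r+1)) • gradient f (x s)) :
    (r * (r + 2) / t ^ 2) • (x t - z t) ∈ fconjDom f := by
  have htr : (0:ℝ) < t ^ r := Real.rpow_pos_of_pos ht r
  have ht2 : (0:ℝ) < t ^ 2 := by positivity
  set g : ℝ → EuclideanSpace ℝ (Fin n) := fun s => gradient f (x s) with hg
  set c : ℝ := (r + 2) / (t ^ 2 * t ^ r) with hcdef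
  have hcpos : 0 < c := by positivity
  set p : EuclideanSpace ℝ (Fin n) := (r * (r + 2) / t ^ 2) • (x t - z t) with hp
  have hsc : c * (r * t ^ r) = r * (r + 2) / t ^ 2 := by
    rw [hcdef]; field_simp
  have hpc : p = c • ((r * t ^ r) • (x t - z t)) := by
    rw [hp, smul_smul, hsc]
  -- integrability
  have hIcont : ContinuousOn (fun s : ℝ => (s ^ (r+1)) • g s) (Set.Ici 0) := by
    have h1 : Continuous (fun s : ℝ => s ^ (r+1)) := by
      apply continuous_iff_continuousAt.2
      intro s
      exact Real.continuousAt_rpow_const s (r+1) (Or.inr (by linarith))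
    exact (h1.continuousOn).smul (hgc.comp_continuousOn hxc)
  have hsub : Set.uIcc (0:ℝ) t ⊆ Set.Ici 0 := by
    rw [Set.uIcc_of_le ht.le]
    exact fun u hu => hu.1
  have hint : IntervalIntegrable (fun s : ℝ => (s ^ (r+1)) • g s) MeasureTheory.volume 0 t :=
    (hIcont.mono hsub).intervalIntegrable
  -- value of ∫ s^(r+1)
  have hpow_int : ∫ s in (0:ℝ)..t, s ^ (r+1) = t ^ (r+2) / (r+2) := by
    rw [integral_rpow (Or.inl (by linarith))]
    rw [Real.zero_rpow (by linarith : r + 1 + 1 ≠ 0)]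
    norm_num
    rw [show r + 1 + 1 = r + 2 by ring]
  have htr2 : t ^ (r+2) = t ^ 2 * t ^ r := by
    rw [Real.rpow_add ht, mul_comm]
    congr 1
    rw [show ((2:ℝ) = ((2:ℕ):ℝ)) by norm_num, Real.rpow_natCast]
  have hcnorm : c * (t ^ (r+2) / (r+2)) = 1 := by
    rw [htr2, hcdef]
    field_simp
  -- the uniform bound
  set H : ℝ := ∫ s in (0:ℝ)..t, s ^ (r+1) * (⟪g s, x s⟫_ℝ - f (x s)) with hH
  have hbound : ∀ y : EuclideanSpace ℝ (Fin n), ⟪p, y⟫_ℝ - f y ≤ c * H := by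
    intro y
    have h1 : Continuous (fun s : ℝ => s ^ (r+1)) := by
      apply continuous_iff_continuousAt.2
      intro s
      exact Real.continuousAt_rpow_const s (r+1) (Or.inr (by linarith))
    have hintA : IntervalIntegrable (fun s : ℝ => s ^ (r+1) * ⟪g s, y⟫_ℝ)
        MeasureTheory.volume 0 t := by
      apply ContinuousOn.intervalIntegrable
      apply ContinuousOn.mono _ hsub
      exact (h1.continuousOn).mul
        ((hgc.comp_continuousOn hxc).inner continuous_const.continuousOn)
    have hintB : IntervalIntegrable (fun s : ℝ => s ^ (r+1) * f y)
        MeasureTheory.volume 0 t :=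
      ((h1.continuousOn.mul continuousOn_const).mono hsub).intervalIntegrable
    have hintH : IntervalIntegrable (fun s : ℝ => s ^ (r+1) * (⟪g s, x s⟫_ℝ - f (x s)))
        MeasureTheory.volume 0 t := by
      apply ContinuousOn.intervalIntegrable
      apply ContinuousOn.mono _ hsub
      exact (h1.continuousOn).mul
        (((hgc.comp_continuousOn hxc).inner hxc).sub (hd.continuous.comp_continuousOn hxc))
    have hinner : ⟪p, y⟫_ℝ = c * ∫ s in (0:ℝ)..t, s ^ (r+1) * ⟪g s, y⟫_ℝ := by
      rw [hpc, real_inner_smul_left, hrep]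
      congr 1
      have hcomm := (innerSL ℝ y).intervalIntegral_comp_comm hint
      calc ⟪(∫ s in (0:ℝ)..t, s ^ (r+1) • gradient f (x s)), y⟫_ℝ
          = (innerSL ℝ y) (∫ s in (0:ℝ)..t, s ^ (r+1) • g s) := by
            rw [innerSL_apply_apply, real_inner_comm]
        _ = ∫ s in (0:ℝ)..t, (innerSL ℝ y) (s ^ (r+1) • g s) := hcomm.symm
        _ = ∫ s in (0:ℝ)..t, s ^ (r+1) * ⟪g s, y⟫_ℝ := by
            apply intervalIntegral.integral_congr
            intro s hs
            simp only [innerSL_apply_apply, real_inner_smul_right]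
            rw [real_inner_comm]
    have hfy : f y = c * ∫ s in (0:ℝ)..t, s ^ (r+1) * f y := by
      rw [intervalIntegral.integral_mul_const, hpow_int]
      rw [show t ^ (r+2) / (r+2) * f y = (t ^ (r+2) / (r+2)) * f y by ring]
      rw [← mul_assoc, hcnorm, one_mul]
    have hmono : (∫ s in (0:ℝ)..t, s ^ (r+1) * (⟪g s, y⟫_ℝ - f y)) ≤ H := by
      apply intervalIntegral.integral_mono_on ht.le
      · apply ContinuousOn.intervalIntegrable
        apply ContinuousOn.mono _ hsub
        exact (h1.continuousOn).mul
          (((hgc.comp_continuousOn hxc).inner continuous_const.continuousOn).sub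
            continuousOn_const)
      · exact hintH
      · intro s hs
        apply mul_le_mul_of_nonneg_left _ (Real.rpow_nonneg hs.1 _)
        have := grad_ineq hc hd (x s) y
        rw [inner_sub_right] at this
        linarith
    calc ⟪p, y⟫_ℝ - f y
        = c * ((∫ s in (0:ℝ)..t, s ^ (r+1) * ⟪g s, y⟫_ℝ) - ∫ s in (0:ℝ)..t, s ^ (r+1) * f y) := by
          rw [mul_sub, ← hinner, ← hfy]
      _ = c * ∫ s in (0:ℝ)..t, s ^ (r+1) * (⟪g s, y⟫_ℝ - f y) := by
          congr 1
          rw [← intervalIntegral.integral_sub hintA hintB]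
          apply intervalIntegral.integral_congr
          intro s hs
          ring
      _ ≤ c * H := mul_le_mul_of_nonneg_left hmono hcpos.le
  -- conclude
  have : fconj f p ≤ ((c * H : ℝ) : EReal) := by
    apply iSup_le
    intro y
    exact_mod_cast EReal.coe_le_coe_iff.mpr (hbound y)
  exact lt_of_le_of_lt this (EReal.coe_lt_top _)

end partA
section partB
variable {n : ℕ} {f : EuclideanSpace ℝ (Fin n) → ℝ}

lemma fconj_lower (p y : EuclideanSpace ℝ (Fin n)) :
    ((⟪p, y⟫_ℝ - f y : ℝ) : EReal) ≤ fconj f p :=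
  le_iSup (fun y => ((⟪p, y⟫_ℝ - f y : ℝ) : EReal)) y

lemma fconj_ne_bot (p : EuclideanSpace ℝ (Fin n)) : fconj f p ≠ ⊥ := by
  intro h
  have := fconj_lower (f := f) p 0
  rw [h, le_bot_iff] at this
  exact (EReal.coe_ne_bot _) this

lemma fconj_eq_coe {p : EuclideanSpace ℝ (Fin n)} (hp : p ∈ fconjDom f) :
    fconj f p = (((fconj f p).toReal : ℝ) : EReal) :=
  (EReal.coe_toReal (LT.lt.ne_top hp) (fconj_ne_bot p)).symm

lemma fenchel_young {p : EuclideanSpace ℝ (Fin n)} (hp : p ∈ fconjDom f)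
    (y : EuclideanSpace ℝ (Fin n)) :
    ⟪p, y⟫_ℝ - f y ≤ (fconj f p).toReal := by
  have h := fconj_lower (f := f) p y
  rw [fconj_eq_coe hp] at h
  exact_mod_cast h

lemma convex_fconjDom : Convex ℝ (fconjDom f) := by
  intro p hp q hq a b ha hb hab
  have hMp := fenchel_young hp
  have hMq := fenchel_young hq
  set Mp := (fconj f p).toReal
  set Mq := (fconj f q).toReal
  have : fconj f (a • p + b • q) ≤ ((a * Mp + b * Mq : ℝ) : EReal) := by
    apply iSup_le
    intro y
    apply EReal.coe_le_coe_iff.mpr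
    have h1 : ⟪a • p + b • q, y⟫_ℝ = a * ⟪p, y⟫_ℝ + b * ⟪q, y⟫_ℝ := by
      rw [inner_add_left, real_inner_smul_left, real_inner_smul_left]
    have h2 : a * (⟪p, y⟫_ℝ - f y) ≤ a * Mp := mul_le_mul_of_nonneg_left (hMp y) ha
    have h3 : b * (⟪q, y⟫_ℝ - f y) ≤ b * Mq := mul_le_mul_of_nonneg_left (hMq y) hb
    have h4 : a * f y + b * f y = f y := by rw [← add_mul, hab, one_mul]
    nlinarith [h2, h3]
  exact lt_of_le_of_lt this (EReal.coe_lt_top _)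

lemma minnorm_inner {K : Set (EuclideanSpace ℝ (Fin n))} (hK : Convex ℝ K)
    {p q : EuclideanSpace ℝ (Fin n)} (hp : p ∈ K) (hq : q ∈ K)
    (hmin : ∀ w ∈ K, ‖q‖ ≤ ‖w‖) : 0 ≤ ⟪q, p - q⟫_ℝ := by
  by_contra hlt
  push_neg at hlt
  set cc : ℝ := ⟪q, p - q⟫_ℝ with hcc
  have hpq : p ≠ q := by
    intro h
    rw [h] at hcc
    simp at hcc
    rw [hcc] at hlt
    exact lt_irrefl _ hlt
  set u : ℝ := ‖p - q‖ ^ 2 with hu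
  have hupos : 0 < u := by
    have h0 : p - q ≠ 0 := sub_ne_zero.mpr hpq
    have h1 : 0 < ‖p - q‖ := norm_pos_iff.mpr h0
    positivity
  set θ : ℝ := min 1 (-cc / u) with hθ
  have hθpos : 0 < θ := lt_min one_pos (div_pos (neg_pos.mpr hlt) hupos)
  have hθle : θ ≤ 1 := min_le_left _ _
  have hwK : q + θ • (p - q) ∈ K := by
    have := hK hq hp (by linarith : (0:ℝ) ≤ 1 - θ) hθpos.le (by ring)
    convert this using 1
    rw [smul_sub]
    module
  have hnorm := hmin _ hwK
  have hsq : ‖q + θ • (p - q)‖ ^ 2 = ‖q‖ ^ 2 + 2 * θ * cc + θ ^ 2 * u := by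
    rw [norm_add_sq_real, real_inner_smul_right, norm_smul]
    rw [Real.norm_eq_abs, mul_pow, sq_abs]
    ring
  have hsq' : ‖q‖ ^ 2 ≤ ‖q + θ • (p - q)‖ ^ 2 := by
    apply pow_le_pow_left₀ (norm_nonneg _) hnorm
  rw [hsq] at hsq'
  have hkey : 0 ≤ 2 * cc + θ * u := by nlinarith
  rcases le_or_gt (-cc / u) 1 with hcase | hcase
  · have hθeq : θ = -cc / u := min_eq_right hcase
    rw [hθeq] at hkey
    rw [div_mul_cancel₀ _ hupos.ne'] at hkey
    linarith
  · have hθeq : θ = 1 := min_eq_left (by linarith)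
    rw [hθeq, one_mul] at hkey
    have : u < -cc := by
      rw [lt_div_iff₀ hupos] at hcase
      linarith
    linarith

lemma first_ineq {K : Set (EuclideanSpace ℝ (Fin n))} (hK : Convex ℝ K)
    {p q : EuclideanSpace ℝ (Fin n)} (hp : p ∈ K) (hq : q ∈ K)
    (hmin : ∀ w ∈ K, ‖q‖ ≤ ‖w‖) : ‖p - q‖ ^ 2 ≤ ‖p‖ ^ 2 - ‖q‖ ^ 2 := by
  have h := minnorm_inner hK hp hq hmin
  have hexp : ‖p - q‖ ^ 2 = ‖p‖ ^ 2 - 2 * ⟪p, q⟫_ℝ + ‖q‖ ^ 2 := by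
    rw [norm_sub_sq_real]
  have h2 : ⟪q, p - q⟫_ℝ = ⟪p, q⟫_ℝ - ‖q‖ ^ 2 := by
    rw [inner_sub_right, real_inner_self_eq_norm_sq, real_inner_comm]
  rw [h2] at h
  linarith [hexp]
end partB

lemma quad_nonpos {r t D B : ℝ} (hr : 0 < r) (ht : 0 < t) (hD : 0 ≤ D) (hB : 0 ≤ B)
    (hle : B * t ^ 2 ≤ r * (r + 2) * D) :
    -(r ^ 2 * (r + 1) / t ^ 3) * D ^ 2 + (r / t) * (B * D) - t / (r + 2) ^ 2 * B ^ 2 ≤ 0 := by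
  have ha : (0:ℝ) ≤ r * (r + 2) * D := by positivity
  have h2 : B * t ^ 2 ≤ (r + 1) * (r * (r + 2) * D) := by nlinarith
  have hnum : 0 ≤ (r * (r + 2) * D - B * t ^ 2) * ((r + 1) * (r * (r + 2) * D) - B * t ^ 2) :=
    mul_nonneg (by linarith) (by linarith)
  have heq : -(r ^ 2 * (r + 1) / t ^ 3) * D ^ 2 + (r / t) * (B * D) - t / (r + 2) ^ 2 * B ^ 2
      = -((r * (r + 2) * D - B * t ^ 2) * ((r + 1) * (r * (r + 2) * D) - B * t ^ 2))
        / (t ^ 3 * (r + 2) ^ 2) := by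
    field_simp
    ring
  rw [heq]
  apply div_nonpos_of_nonpos_of_nonneg (by linarith) (by positivity)
section V
variable {n : ℕ} {f : EuclideanSpace ℝ (Fin n) → ℝ} {r : ℝ}
  {x z x' z' : ℝ → EuclideanSpace ℝ (Fin n)} {pstar : EuclideanSpace ℝ (Fin n)} {Fs : ℝ}

lemma hasDerivAt_V (hd : Differentiable ℝ f) (hr : 0 < r)
    (hx : ∀ t ∈ Set.Ici (0 : ℝ), HasDerivWithinAt x (x' t) (Set.Ici 0) t)
    (hz : ∀ t ∈ Set.Ici (0 : ℝ), HasDerivWithinAt z (z' t) (Set.Ici 0) t)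
    (hode1 : ∀ t > (0 : ℝ), x' t = (r / t) • (z t - x t))
    (hode2 : ∀ t > (0 : ℝ), z' t = -((t / r) • gradient f (x t)))
    {t : ℝ} (ht : 0 < t) :
    HasDerivAt (fun s => r ^ 2 / (2 * s ^ 2) * ‖x s - z s‖ ^ 2
        - s ^ 2 / (2 * (r + 2) ^ 2) * ‖pstar‖ ^ 2
        + f (x s) + Fs - ⟪pstar, x s⟫_ℝ)
      (-(r ^ 2 * (r + 1) / t ^ 3) * ‖x t - z t‖ ^ 2
        + (r / t) * ⟪pstar, x t - z t⟫_ℝ - t / (r + 2) ^ 2 * ‖pstar‖ ^ 2) t := by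
  have hmem : Set.Ici (0:ℝ) ∈ 𝓝 t := Ici_mem_nhds ht
  have hxd : HasDerivAt x (x' t) t := (hx t ht.le).hasDerivAt hmem
  have hzd : HasDerivAt z (z' t) t := (hz t ht.le).hasDerivAt hmem
  have hdvec : HasDerivAt (fun s => x s - z s) (x' t - z' t) t := hxd.sub hzd
  -- derivative of ‖x s - z s‖²
  have hN : HasDerivAt (fun s => ‖x s - z s‖ ^ 2)
      (2 * ⟪x t - z t, x' t - z' t⟫_ℝ) t := by
    have h1 := hdvec.inner ℝ hdvec
    have h2 : (fun s => ‖x s - z s‖ ^ 2) = fun s => ⟪x s - z s, x s - z s⟫_ℝ :=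
      funext fun s => (real_inner_self_eq_norm_sq _).symm
    rw [h2]
    refine h1.congr_deriv ?_
    rw [real_inner_comm]
    ring
  -- derivative of r²/(2s²)
  have hA : HasDerivAt (fun s : ℝ => r ^ 2 / (2 * s ^ 2)) (-(r ^ 2 / t ^ 3)) t := by
    have h1 : HasDerivAt (fun s : ℝ => 2 * s ^ 2) (2 * (2 * t)) t := by
      simpa using (hasDerivAt_pow 2 t).const_mul 2
    have h2 := h1.inv (by positivity)
    have h3 := h2.const_mul (r ^ 2)
    have hfe : (fun s : ℝ => r ^ 2 / (2 * s ^ 2)) = fun y : ℝ => r ^ 2 * (2 * y ^ 2)⁻¹ := by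
      funext s; rw [div_eq_mul_inv]
    rw [hfe]
    refine h3.congr_deriv ?_
    field_simp
  have hterm1 : HasDerivAt (fun s => r ^ 2 / (2 * s ^ 2) * ‖x s - z s‖ ^ 2)
      (r ^ 2 / (2 * t ^ 2) * (2 * ⟪x t - z t, x' t - z' t⟫_ℝ)
        + (-(r ^ 2 / t ^ 3)) * ‖x t - z t‖ ^ 2) t := by
    have := hA.mul hN
    refine this.congr_deriv ?_
    ring
  have hterm2 : HasDerivAt (fun s : ℝ => s ^ 2 / (2 * (r + 2) ^ 2) * ‖pstar‖ ^ 2)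
      (2 * t / (2 * (r + 2) ^ 2) * ‖pstar‖ ^ 2) t := by
    have h1 : HasDerivAt (fun s : ℝ => s ^ 2) (2 * t) t := by
      simpa using hasDerivAt_pow 2 t
    have := (h1.div_const (2 * (r + 2) ^ 2)).mul_const (‖pstar‖ ^ 2)
    convert this using 1
  have hterm3 : HasDerivAt (fun s => f (x s)) (⟪gradient f (x t), x' t⟫_ℝ) t := by
    have := (hd (x t)).hasFDerivAt.comp_hasDerivAt t hxd
    rw [inner_gradient_eq]
    exact this
  have hterm4 : HasDerivAt (fun s => ⟪pstar, x s⟫_ℝ) (⟪pstar, x' t⟫_ℝ) t := by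
    have := (hasDerivAt_const t pstar).inner ℝ hxd
    simpa using this
  have hsum := (((hterm1.sub hterm2).add hterm3).add_const Fs).sub hterm4
  refine hsum.congr_deriv ?_
  -- now show the two derivative expressions agree
  rw [hode1 t ht, hode2 t ht]
  have e1 : ⟪x t - z t, (r / t) • (z t - x t) - -((t / r) • gradient f (x t))⟫_ℝ
      = -(r / t) * ‖x t - z t‖ ^ 2 + (t / r) * ⟪gradient f (x t), x t - z t⟫_ℝ := by
    rw [sub_neg_eq_add, inner_add_right, real_inner_smul_right, real_inner_smul_right]
    have : ⟪x t - z t, z t - x t⟫_ℝ = -‖x t - z t‖ ^ 2 := by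
      rw [show z t - x t = -(x t - z t) by abel, inner_neg_right,
        real_inner_self_eq_norm_sq]
    rw [this, real_inner_comm]
    ring
  have e2 : ⟪gradient f (x t), (r / t) • (z t - x t)⟫_ℝ
      = -(r / t) * ⟪gradient f (x t), x t - z t⟫_ℝ := by
    rw [real_inner_smul_right, show z t - x t = -(x t - z t) by abel, inner_neg_right]
    ring
  have e3 : ⟪pstar, (r / t) • (z t - x t)⟫_ℝ = -(r / t) * ⟪pstar, x t - z t⟫_ℝ := by
    rw [real_inner_smul_right, show z t - x t = -(x t - z t) by abel, inner_neg_right]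
    ring
  rw [e1, e2, e3]
  field_simp
  ring
end V
section lim
variable {n : ℕ} {f : EuclideanSpace ℝ (Fin n) → ℝ} {r : ℝ}
  {x z x' z' : ℝ → EuclideanSpace ℝ (Fin n)}

lemma slope_limit (hgc : Continuous (fun y => gradient f y)) (hr : 0 < r)
    (hx : ∀ t ∈ Set.Ici (0 : ℝ), HasDerivWithinAt x (x' t) (Set.Ici 0) t)
    (hx' : ContinuousOn x' (Set.Ici 0))
    (hz : ∀ t ∈ Set.Ici (0 : ℝ), HasDerivWithinAt z (z' t) (Set.Ici 0) t)
    (hz' : ContinuousOn z' (Set.Ici 0))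
    (hxz0 : x 0 = z 0)
    (hode1 : ∀ t > (0 : ℝ), x' t = (r / t) • (z t - x t))
    (hode2 : ∀ t > (0 : ℝ), z' t = -((t / r) • gradient f (x t))) :
    Tendsto (fun s : ℝ => s⁻¹ • (x s - z s)) (𝓝[>] (0:ℝ)) (𝓝 0) := by
  have hdiff : Set.Ici (0:ℝ) \ {0} = Set.Ioi 0 := by
    ext u
    simp only [Set.mem_diff, Set.mem_Ici, Set.mem_singleton_iff, Set.mem_Ioi]
    constructor
    · rintro ⟨h1, h2⟩; exact lt_of_le_of_ne h1 (Ne.symm h2)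
    · intro h; exact ⟨h.le, h.ne'⟩
  have hmono : 𝓝[>] (0:ℝ) ≤ 𝓝[Set.Ici 0] (0:ℝ) :=
    nhdsWithin_mono _ Set.Ioi_subset_Ici_self
  have hsx : Tendsto (slope x 0) (𝓝[>] (0:ℝ)) (𝓝 (x' 0)) := by
    have := (hasDerivWithinAt_iff_tendsto_slope.mp (hx 0 Set.self_mem_Ici))
    rwa [hdiff] at this
  have hsz : Tendsto (slope z 0) (𝓝[>] (0:ℝ)) (𝓝 (z' 0)) := by
    have := (hasDerivWithinAt_iff_tendsto_slope.mp (hz 0 Set.self_mem_Ici))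
    rwa [hdiff] at this
  have hxc : ContinuousOn x (Set.Ici 0) := fun s hs => (hx s hs).continuousWithinAt
  -- z' 0 = 0
  have hz'0 : z' 0 = 0 := by
    have h1 : Tendsto z' (𝓝[>] (0:ℝ)) (𝓝 (z' 0)) :=
      (hz'.continuousWithinAt Set.self_mem_Ici).mono_left hmono
    have h2 : Tendsto z' (𝓝[>] (0:ℝ)) (𝓝 0) := by
      have hg : Tendsto (fun s => gradient f (x s)) (𝓝[>] (0:ℝ)) (𝓝 (gradient f (x 0))) :=
        (hgc.tendsto (x 0)).comp ((hxc.continuousWithinAt Set.self_mem_Ici).mono_left hmono)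
      have hsc : Tendsto (fun s : ℝ => s / r) (𝓝[>] (0:ℝ)) (𝓝 0) := by
        have : Tendsto (fun s : ℝ => s / r) (𝓝 (0:ℝ)) (𝓝 (0 / r)) :=
          (continuous_id.div_const r).tendsto 0
        simpa using this.mono_left nhdsWithin_le_nhds
      have := (hsc.smul hg).neg
      rw [zero_smul, neg_zero] at this
      apply Tendsto.congr' _ this
      filter_upwards [self_mem_nhdsWithin] with s hs
      exact (hode2 s hs).symm
    exact tendsto_nhds_unique h1 h2
  -- x' 0 = 0
  have hx'0 : x' 0 = 0 := by
    have h1 : Tendsto x' (𝓝[>] (0:ℝ)) (𝓝 (x' 0)) :=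
      (hx'.continuousWithinAt Set.self_mem_Ici).mono_left hmono
    have h2 : Tendsto x' (𝓝[>] (0:ℝ)) (𝓝 (r • (z' 0 - x' 0))) := by
      have := (hsz.sub hsx).const_smul r
      apply Tendsto.congr' _ this
      filter_upwards [self_mem_nhdsWithin] with s hs
      rw [hode1 s hs]
      rw [slope_def_module, slope_def_module, hxz0, ← smul_sub]
      rw [sub_zero, sub_sub_sub_cancel_right, div_eq_mul_inv, mul_smul]
    have heq := tendsto_nhds_unique h1 h2
    rw [hz'0, zero_sub, smul_neg] at heq
    rw [eq_neg_iff_add_eq_zero] at heq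
    have h3 : (1 + r) • x' 0 = 0 := by rw [add_smul, one_smul]; exact heq
    rcases smul_eq_zero.mp h3 with h | h
    · linarith
    · exact h
  have hfinal := hsx.sub hsz
  rw [hx'0, hz'0, sub_self] at hfinal
  apply Tendsto.congr' _ hfinal
  filter_upwards [self_mem_nhdsWithin] with s hs
  rw [slope_def_module, slope_def_module, hxz0, ← smul_sub]
  rw [sub_zero, sub_sub_sub_cancel_right]
end lim

/-- for a solution `(x, z)` of the NAG ODE with parameter `r`, define
`p(t) := (r(r+2)/t²)(x(t) − z(t))`.  Then (a) `p(t) ∈ dom f*` for all `t > 0`;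
(b) if `p⋆ ∈ dom f*`, then
`‖p(t) − p⋆‖² ≤ ‖p(t)‖² − ‖p⋆‖² ≤ 2(r+2)² D_f(x₀,p⋆)/t²` for all `t > 0`. -/
theorem stmt10 {n : ℕ} (hn : 1 ≤ n) (L : ℝ) (hL : 0 < L)
    (f : EuclideanSpace ℝ (Fin n) → ℝ) (hf : LSmoothConvex L f)
    (r : ℝ) (hr : 0 < r) (x₀ : EuclideanSpace ℝ (Fin n))
    (x z x' z' : ℝ → EuclideanSpace ℝ (Fin n))
    (hx : ∀ t ∈ Set.Ici (0 : ℝ), HasDerivWithinAt x (x' t) (Set.Ici 0) t)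
    (hx' : ContinuousOn x' (Set.Ici 0))
    (hz : ∀ t ∈ Set.Ici (0 : ℝ), HasDerivWithinAt z (z' t) (Set.Ici 0) t)
    (hz' : ContinuousOn z' (Set.Ici 0))
    (hx0 : x 0 = x₀) (hz0 : z 0 = x₀)
    (hode1 : ∀ t > (0 : ℝ), x' t = (r / t) • (z t - x t))
    (hode2 : ∀ t > (0 : ℝ), z' t = -((t / r) • gradient f (x t)))
    (pstar : EuclideanSpace ℝ (Fin n))
    (hps : pstar ∈ closure (fconjDom f))
    (hmin : ∀ q ∈ closure (fconjDom f), ‖pstar‖ ≤ ‖q‖) :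
    (∀ t > (0 : ℝ), (r * (r + 2) / t ^ 2) • (x t - z t) ∈ fconjDom f) ∧
    (pstar ∈ fconjDom f → ∀ t > (0 : ℝ),
      ‖(r * (r + 2) / t ^ 2) • (x t - z t) - pstar‖ ^ 2 ≤
        ‖(r * (r + 2) / t ^ 2) • (x t - z t)‖ ^ 2 - ‖pstar‖ ^ 2 ∧
      ‖(r * (r + 2) / t ^ 2) • (x t - z t)‖ ^ 2 - ‖pstar‖ ^ 2 ≤
        2 * (r + 2) ^ 2 * dualDiv f x₀ pstar / t ^ 2) := by
  obtain ⟨hc, hd, hlip⟩ := hf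
  have hgc : Continuous (fun y => gradient f y) := hlip.continuous
  have hxz0 : x 0 = z 0 := by rw [hx0, hz0]
  have hxc : ContinuousOn x (Set.Ici 0) := fun s hs => (hx s hs).continuousWithinAt
  have hA : ∀ t > (0:ℝ), (r * (r + 2) / t ^ 2) • (x t - z t) ∈ fconjDom f := by
    intro t ht
    exact mem_fconjDom_of_rep hc hd hgc hxc hr ht
      (rep_integral hgc hr hx hz hxz0 hode1 hode2 ht)
  refine ⟨hA, ?_⟩
  intro hpsdom t ht
  have hKc : Convex ℝ (closure (fconjDom f)) := convex_fconjDom.closure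
  have hpK : ∀ s > (0:ℝ), (r * (r + 2) / s ^ 2) • (x s - z s) ∈ closure (fconjDom f) :=
    fun s hs => subset_closure (hA s hs)
  have hnormp : ∀ s > (0:ℝ), ‖(r * (r + 2) / s ^ 2) • (x s - z s)‖
      = r * (r + 2) / s ^ 2 * ‖x s - z s‖ := by
    intro s hs
    rw [norm_smul, Real.norm_eq_abs, abs_of_pos (by positivity)]
  refine ⟨first_ineq hKc (hpK t ht) hps hmin, ?_⟩
  -- the Lyapunov function
  set Fs : ℝ := (fconj f pstar).toReal with hFs
  set V : ℝ → ℝ := fun s => r ^ 2 / (2 * s ^ 2) * ‖x s - z s‖ ^ 2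
      - s ^ 2 / (2 * (r + 2) ^ 2) * ‖pstar‖ ^ 2
      + f (x s) + Fs - ⟪pstar, x s⟫_ℝ with hVdef
  set Φ : ℝ → ℝ := fun s => -(r ^ 2 * (r + 1) / s ^ 3) * ‖x s - z s‖ ^ 2
      + (r / s) * ⟪pstar, x s - z s⟫_ℝ - s / (r + 2) ^ 2 * ‖pstar‖ ^ 2 with hΦdef
  have hV : ∀ s ∈ Set.Ioi (0:ℝ), HasDerivAt V (Φ s) s := fun s hs =>
    hasDerivAt_V hd hr hx hz hode1 hode2 hs
  have hΦle : ∀ s ∈ Set.Ioi (0:ℝ), Φ s ≤ 0 := by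
    intro s hs
    have hs0 : (0:ℝ) < s := hs
    have hBle : ‖pstar‖ ≤ r * (r + 2) / s ^ 2 * ‖x s - z s‖ := by
      have := hmin _ (hpK s hs0)
      rwa [hnormp s hs0] at this
    have hB2 : ‖pstar‖ * s ^ 2 ≤ r * (r + 2) * ‖x s - z s‖ := by
      have h2 := mul_le_mul_of_nonneg_right hBle (by positivity : (0:ℝ) ≤ s ^ 2)
      calc ‖pstar‖ * s ^ 2 ≤ r * (r + 2) / s ^ 2 * ‖x s - z s‖ * s ^ 2 := h2
        _ = r * (r + 2) * ‖x s - z s‖ := by field_simp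
    have hip : ⟪pstar, x s - z s⟫_ℝ ≤ ‖pstar‖ * ‖x s - z s‖ := real_inner_le_norm _ _
    have hq := quad_nonpos (D := ‖x s - z s‖) (B := ‖pstar‖) hr hs0 (norm_nonneg _)
      (norm_nonneg _) hB2
    have hcoef : (0:ℝ) ≤ r / s := by positivity
    have := mul_le_mul_of_nonneg_left hip hcoef
    simp only [hΦdef]
    linarith
  have hanti : AntitoneOn V (Set.Ioi 0) := by
    apply antitoneOn_of_deriv_nonpos (convex_Ioi 0)
    · intro s hs
      exact (hV s hs).continuousAt.continuousWithinAt
    · rw [interior_Ioi]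
      intro s hs
      exact (hV s hs).differentiableAt.differentiableWithinAt
    · rw [interior_Ioi]
      intro s hs
      rw [(hV s hs).deriv]
      exact hΦle s hs
  -- limit of V at 0⁺
  have hq0 := slope_limit hgc hr hx hx' hz hz' hxz0 hode1 hode2
  have hT1 : Tendsto (fun s : ℝ => r ^ 2 / (2 * s ^ 2) * ‖x s - z s‖ ^ 2)
      (𝓝[>] (0:ℝ)) (𝓝 0) := by
    have hcont : Continuous (fun v : EuclideanSpace ℝ (Fin n) => r ^ 2 / 2 * ‖v‖ ^ 2) :=
      continuous_const.mul (continuous_norm.pow 2)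
    have h1 := (hcont.tendsto 0).comp hq0
    have h2 : Tendsto (fun s : ℝ => r ^ 2 / 2 * ‖s⁻¹ • (x s - z s)‖ ^ 2)
        (𝓝[>] (0:ℝ)) (𝓝 0) := by
      have h0 : r ^ 2 / 2 * ‖(0 : EuclideanSpace ℝ (Fin n))‖ ^ 2 = 0 := by simp
      rw [h0] at h1
      exact h1
    apply Tendsto.congr' _ h2
    filter_upwards [self_mem_nhdsWithin] with s hs
    have hs0 : (0:ℝ) < s := hs
    rw [norm_smul, Real.norm_eq_abs, abs_of_pos (by positivity : (0:ℝ) < s⁻¹)]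
    rw [mul_pow, inv_pow]
    field_simp
  have hT2 : Tendsto (fun s : ℝ => s ^ 2 / (2 * (r + 2) ^ 2) * ‖pstar‖ ^ 2)
      (𝓝[>] (0:ℝ)) (𝓝 0) := by
    have hco : Continuous (fun s : ℝ => s ^ 2 / (2 * (r + 2) ^ 2) * ‖pstar‖ ^ 2) :=
      (((continuous_pow 2).div_const _).mul continuous_const)
    have h2 : Tendsto (fun s : ℝ => s ^ 2 / (2 * (r + 2) ^ 2) * ‖pstar‖ ^ 2) (𝓝[>] (0:ℝ))
        (𝓝 ((0:ℝ) ^ 2 / (2 * (r + 2) ^ 2) * ‖pstar‖ ^ 2)) :=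
      (hco.tendsto 0).mono_left nhdsWithin_le_nhds
    simpa using h2
  have hxtend : Tendsto x (𝓝[>] (0:ℝ)) (𝓝 x₀) := by
    have := (hxc.continuousWithinAt Set.self_mem_Ici).mono_left
      (nhdsWithin_mono _ Set.Ioi_subset_Ici_self)
    rwa [hx0] at this
  have hT3 : Tendsto (fun s => f (x s)) (𝓝[>] (0:ℝ)) (𝓝 (f x₀)) :=
    (hd.continuous.tendsto x₀).comp hxtend
  have hT4 : Tendsto (fun s => ⟪pstar, x s⟫_ℝ) (𝓝[>] (0:ℝ)) (𝓝 ⟪pstar, x₀⟫_ℝ) := by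
    have hcont : Continuous (fun v : EuclideanSpace ℝ (Fin n) => ⟪pstar, v⟫_ℝ) :=
      continuous_const.inner continuous_id
    exact (hcont.tendsto x₀).comp hxtend
  have hlim : Tendsto V (𝓝[>] (0:ℝ)) (𝓝 (f x₀ + Fs - ⟪pstar, x₀⟫_ℝ)) := by
    have := (((hT1.sub hT2).add hT3).add_const Fs).sub hT4
    rw [hVdef]
    convert this using 2
    ring
  have hVt : V t ≤ f x₀ + Fs - ⟪pstar, x₀⟫_ℝ := by
    apply ge_of_tendsto hlim
    filter_upwards [Ioc_mem_nhdsGT_of_mem (Set.mem_Ico.mpr ⟨le_rfl, ht⟩)] with s hs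
    exact hanti hs.1 ht hs.2
  have hFY : 0 ≤ f (x t) + Fs - ⟪pstar, x t⟫_ℝ := by
    have := fenchel_young hpsdom (x t)
    rw [← hFs] at this
    linarith
  have hdd : dualDiv f x₀ pstar = f x₀ + Fs - ⟪pstar, x₀⟫_ℝ := rfl
  have hS : r ^ 2 / (2 * t ^ 2) * ‖x t - z t‖ ^ 2
      ≤ dualDiv f x₀ pstar + t ^ 2 / (2 * (r + 2) ^ 2) * ‖pstar‖ ^ 2 := by
    rw [hdd]
    have hVt' : r ^ 2 / (2 * t ^ 2) * ‖x t - z t‖ ^ 2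
        - t ^ 2 / (2 * (r + 2) ^ 2) * ‖pstar‖ ^ 2
        + f (x t) + Fs - ⟪pstar, x t⟫_ℝ ≤ f x₀ + Fs - ⟪pstar, x₀⟫_ℝ := hVt
    linarith
  have hnp : ‖(r * (r + 2) / t ^ 2) • (x t - z t)‖ ^ 2
      = (r * (r + 2) / t ^ 2) ^ 2 * ‖x t - z t‖ ^ 2 := by
    rw [hnormp t ht, mul_pow]
  have hc2 : (0:ℝ) ≤ 2 * (r + 2) ^ 2 / t ^ 2 := by positivity
  have hmul := mul_le_mul_of_nonneg_left hS hc2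
  have e1 : 2 * (r + 2) ^ 2 / t ^ 2 * (r ^ 2 / (2 * t ^ 2) * ‖x t - z t‖ ^ 2)
      = (r * (r + 2) / t ^ 2) ^ 2 * ‖x t - z t‖ ^ 2 := by
    field_simp
  have e2 : 2 * (r + 2) ^ 2 / t ^ 2
        * (dualDiv f x₀ pstar + t ^ 2 / (2 * (r + 2) ^ 2) * ‖pstar‖ ^ 2)
      = 2 * (r + 2) ^ 2 * dualDiv f x₀ pstar / t ^ 2 + ‖pstar‖ ^ 2 := by
    field_simp
  rw [hnp]
  rw [e1, e2] at hmul
  linarith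
end

section
/- Let f : ℝ^n → ℝ be L-smooth convex, and let (x^(k), y^(k), z^(k)) be the accelerated gradient method iterates with parameter sequence (A_k) and initial point x₀. For w ∈ ℝ^n define the energy 𝒱_w^(k) := (A_k/2)(g(x^(k)) − g(w)) + ‖z^(k) + (A_k/4)p⋆ − w‖². Then for every k ∈ ℕ, 𝒱_w^(k+1) − 𝒱_w^(k) ≤ −(A_k(A_{k+1} − A_k)/8)·⟨∇g(y^(k)), p⋆⟩ ≤ 0. -/
open scoped InnerProductSpace
open Filter Topology

open Set

section Aux

variable {E : Type*} [NormedAddCommGroup E] [InnerProductSpace ℝ E] [CompleteSpace E]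

lemma lineDeriv' {f : E → ℝ} (hd : Differentiable ℝ f) (a v : E) (t : ℝ) :
    HasDerivAt (fun s : ℝ => f (a + s • v)) ⟪gradient f (a + t • v), v⟫_ℝ t := by
  have hc : HasDerivAt (fun s : ℝ => a + s • v) v t := by
    simpa using ((hasDerivAt_id t).smul_const v).const_add a
  have hg : HasFDerivAt f (InnerProductSpace.toDual ℝ E (gradient f (a + t • v))) (a + t • v) :=
    hasGradientAt_iff_hasFDerivAt.mp (hd _).hasGradientAt
  simpa [InnerProductSpace.toDual_apply_apply, Function.comp_def] using hg.comp_hasDerivAt t hc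

lemma convex_grad_ineq {f : E → ℝ} (hc : ConvexOn ℝ Set.univ f) (hd : Differentiable ℝ f)
    (a b : E) : f a + ⟪gradient f a, b - a⟫_ℝ ≤ f b := by
  have hφc : ConvexOn ℝ Set.univ (fun t : ℝ => f (a + t • (b - a))) := by
    have h := hc.comp_affineMap (AffineMap.lineMap a b)
    have he : (f ∘ (AffineMap.lineMap a b)) = fun t : ℝ => f (a + t • (b - a)) := by
      funext t
      simp only [Function.comp_apply, AffineMap.lineMap_apply_module]
      congr 1
      module
    rw [he] at h
    simpa using h
  have hder : HasDerivAt (fun t : ℝ => f (a + t • (b - a))) ⟪gradient f a, b - a⟫_ℝ 0 := by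
    simpa using lineDeriv' hd a (b - a) 0
  have hs := hφc.le_slope_of_hasDerivAt (mem_univ (0:ℝ)) (mem_univ (1:ℝ)) zero_lt_one hder
  simp [slope_def_field] at hs
  rw [inner_gradient_left, map_sub]
  linarith

lemma descent_lemma {f : E → ℝ} (hd : Differentiable ℝ f) {L : ℝ} (hL0 : 0 ≤ L)
    (hlip : ∀ p q : E, ‖gradient f p - gradient f q‖ ≤ L * ‖p - q‖) (a b : E) :
    f b ≤ f a + ⟪gradient f a, b - a⟫_ℝ + L / 2 * ‖b - a‖ ^ 2 := by
  set v := b - a with hv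
  set c1 := ⟪gradient f a, v⟫_ℝ with hc1
  set c2 := L / 2 * ‖v‖ ^ 2 with hc2
  set χ := fun t : ℝ => f (a + t • v) - t * c1 - t ^ 2 * c2 with hχ
  have hder : ∀ t : ℝ, HasDerivAt χ
      (⟪gradient f (a + t • v), v⟫_ℝ - c1 - 2 * t * c2) t := by
    intro t
    have h1 := lineDeriv' hd a v t
    have h2 : HasDerivAt (fun t : ℝ => t * c1) c1 t := by
      simpa using (hasDerivAt_id t).mul_const c1
    have h3 : HasDerivAt (fun t : ℝ => t ^ 2 * c2) (2 * t * c2) t := by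
      simpa [mul_comm] using (hasDerivAt_pow 2 t).mul_const c2
    simpa [Pi.sub_def] using (h1.sub h2).sub h3
  have hanti : AntitoneOn χ (Icc (0:ℝ) 1) := by
    apply antitoneOn_of_deriv_nonpos (convex_Icc 0 1)
    · exact Continuous.continuousOn (by
        have := hd.continuous; fun_prop)
    · intro t ht
      exact ((hder t).differentiableAt).differentiableWithinAt
    · intro t ht
      rw [interior_Icc] at ht
      rw [(hder t).deriv]
      have hb : ⟪gradient f (a + t • v) - gradient f a, v⟫_ℝ ≤ L * t * ‖v‖ ^ 2 := by
        calc ⟪gradient f (a + t • v) - gradient f a, v⟫_ℝ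
            ≤ ‖gradient f (a + t • v) - gradient f a‖ * ‖v‖ := real_inner_le_norm _ _
          _ ≤ (L * ‖(a + t • v) - a‖) * ‖v‖ := by
              have := hlip (a + t • v) a
              have hn : (0:ℝ) ≤ ‖v‖ := norm_nonneg _
              nlinarith [this]
          _ = L * t * ‖v‖ ^ 2 := by
              rw [add_sub_cancel_left, norm_smul, Real.norm_eq_abs, abs_of_pos ht.1]
              ring
      rw [inner_sub_left] at hb
      simp only [hc1, hc2] at *
      nlinarith [hb]
  have h01 : χ 1 ≤ χ 0 := hanti (by norm_num) (by norm_num) (by norm_num)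
  have he0 : χ 0 = f a := by simp [hχ]
  have he1 : χ 1 = f b - c1 - c2 := by
    simp only [hχ, one_smul, one_pow, one_mul]
    congr 2
    rw [hv]
    abel_nf
  rw [he0, he1] at h01
  simp only [hc1, hc2, hv] at h01
  linarith

variable {E : Type*} [NormedAddCommGroup E] [InnerProductSpace ℝ E] [CompleteSpace E]

lemma smul_norm_sq' (t : ℝ) (v : E) : ‖t • v‖ ^ 2 = t ^ 2 * ‖v‖ ^ 2 := by
  rw [norm_smul, mul_pow, Real.norm_eq_abs, sq_abs]

lemma gradient_sub_inner {f : E → ℝ} (hd : Differentiable ℝ f) (p u : E) :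
    gradient (fun v => f v - ⟪p, v⟫_ℝ) u = gradient f u - p := by
  have h1 : HasFDerivAt f (InnerProductSpace.toDual ℝ E (gradient f u)) u :=
    hasGradientAt_iff_hasFDerivAt.mp (hd u).hasGradientAt
  have h2 : HasFDerivAt (fun v : E => ⟪p, v⟫_ℝ) (InnerProductSpace.toDual ℝ E p) u := by
    have he : (InnerProductSpace.toDual ℝ E p : E →L[ℝ] ℝ) = innerSL ℝ p := by
      ext v; simp
    rw [he]
    exact (innerSL ℝ p).hasFDerivAt
  have hgrad : HasGradientAt (fun v => f v - ⟪p, v⟫_ℝ) (gradient f u - p) u := by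
    rw [hasGradientAt_iff_hasFDerivAt, map_sub]
    exact h1.sub h2
  exact hgrad.gradient

lemma fconj_bound {n : ℕ} {f : EuclideanSpace ℝ (Fin n) → ℝ} {p : EuclideanSpace ℝ (Fin n)}
    (hp : p ∈ fconjDom f) : ∃ M : ℝ, ∀ x, ⟪p, x⟫_ℝ - f x ≤ M := by
  have hne : fconj f p ≠ ⊥ := by
    have h0 : ((⟪p, 0⟫_ℝ - f 0 : ℝ) : EReal) ≤ fconj f p := by
      rw [fconj]
      exact le_iSup (fun y : EuclideanSpace ℝ (Fin n) => ((⟪p, y⟫_ℝ - f y : ℝ) : EReal)) 0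
    intro hbot
    rw [hbot] at h0
    exact (EReal.bot_lt_coe _).not_ge h0
  have hlt : fconj f p < ⊤ := hp
  refine ⟨(fconj f p).toReal, fun x => ?_⟩
  have hx : ((⟪p, x⟫_ℝ - f x : ℝ) : EReal) ≤ fconj f p := by
    rw [fconj]
    exact le_iSup (fun y : EuclideanSpace ℝ (Fin n) => ((⟪p, y⟫_ℝ - f y : ℝ) : EReal)) x
  rw [← EReal.coe_toReal hlt.ne hne] at hx
  exact_mod_cast hx

lemma fconj_lt_top_of_bound {n : ℕ} {f : EuclideanSpace ℝ (Fin n) → ℝ}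
    {p : EuclideanSpace ℝ (Fin n)} {M : ℝ} (h : ∀ x, ⟪p, x⟫_ℝ - f x ≤ M) :
    p ∈ fconjDom f := by
  have : fconj f p ≤ (M : EReal) := iSup_le fun x => by exact_mod_cast h x
  exact lt_of_le_of_lt this (EReal.coe_lt_top M)

lemma fconjDom_convex {n : ℕ} (f : EuclideanSpace ℝ (Fin n) → ℝ) : Convex ℝ (fconjDom f) := by
  intro p hp q hq s t hs ht hst
  obtain ⟨Mp, hMp⟩ := fconj_bound hp
  obtain ⟨Mq, hMq⟩ := fconj_bound hq
  apply fconj_lt_top_of_bound (M := s * Mp + t * Mq)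
  intro x
  have h1 : ⟪s • p + t • q, x⟫_ℝ = s * ⟪p, x⟫_ℝ + t * ⟪q, x⟫_ℝ := by
    rw [inner_add_left, real_inner_smul_left, real_inner_smul_left]
  have hfx : s * f x + t * f x = f x := by rw [← add_mul, hst, one_mul]
  nlinarith [hMp x, hMq x, mul_le_mul_of_nonneg_left (hMp x) hs,
    mul_le_mul_of_nonneg_left (hMq x) ht]

lemma grad_mem_fconjDom {n : ℕ} {f : EuclideanSpace ℝ (Fin n) → ℝ}
    (hc : ConvexOn ℝ Set.univ f) (hd : Differentiable ℝ f) (v : EuclideanSpace ℝ (Fin n)) :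
    gradient f v ∈ fconjDom f := by
  apply fconj_lt_top_of_bound (M := ⟪gradient f v, v⟫_ℝ - f v)
  intro x
  have := convex_grad_ineq hc hd v x
  rw [inner_sub_right] at this
  linarith

lemma min_norm_vi {n : ℕ} {f : EuclideanSpace ℝ (Fin n) → ℝ}
    {pstar : EuclideanSpace ℝ (Fin n)} (hps : pstar ∈ closure (fconjDom f))
    (hmin : ∀ q ∈ closure (fconjDom f), ‖pstar‖ ≤ ‖q‖)
    {q : EuclideanSpace ℝ (Fin n)} (hq : q ∈ closure (fconjDom f)) :
    0 ≤ ⟪q - pstar, pstar⟫_ℝ := by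
  have hC : Convex ℝ (closure (fconjDom f)) := (fconjDom_convex f).closure
  set ip := ⟪q - pstar, pstar⟫_ℝ with hip
  set N := ‖q - pstar‖ ^ 2 with hN
  have hNn : 0 ≤ N := by positivity
  have key : ∀ t : ℝ, 0 < t → t < 1 → 0 ≤ 2 * ip + t * N := by
    intro t ht0 ht1
    have hm : pstar + t • (q - pstar) ∈ closure (fconjDom f) := by
      have := hC hps hq (by linarith : (0:ℝ) ≤ 1 - t) ht0.le (by ring)
      have he : (1 - t) • pstar + t • q = pstar + t • (q - pstar) := by module
      rwa [he] at this
    have hle := hmin _ hm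
    have hsq : ‖pstar‖ ^ 2 ≤ ‖pstar + t • (q - pstar)‖ ^ 2 := by
      have := norm_nonneg pstar
      nlinarith [hle]
    rw [norm_add_sq_real, real_inner_smul_right, norm_smul, Real.norm_eq_abs,
      abs_of_pos ht0] at hsq
    have hcomm : ⟪pstar, q - pstar⟫_ℝ = ip := real_inner_comm _ _
    rw [hcomm] at hsq
    have hsq' : 0 ≤ 2 * (t * ip) + t ^ 2 * N := by rw [hN]; nlinarith [hsq]
    nlinarith [hsq', ht0]
  by_contra hneg
  push_neg at hneg
  have ht0 : (0:ℝ) < min (1/2) (-ip / (N + 1)) := by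
    apply lt_min (by norm_num)
    apply div_pos (by linarith) (by linarith)
  have ht1 : min (1/2) (-ip / (N + 1)) < 1 := lt_of_le_of_lt (min_le_left _ _) (by norm_num)
  have := key _ ht0 ht1
  have h2 : min (1/2) (-ip / (N + 1)) * N ≤ (-ip / (N + 1)) * N :=
    mul_le_mul_of_nonneg_right (min_le_right _ _) hNn
  have h3 : (-ip / (N + 1)) * N ≤ -ip := by
    rw [div_mul_eq_mul_div, div_le_iff₀ (by linarith : (0:ℝ) < N + 1)]
    nlinarith
  linarith

end Aux

set_option maxHeartbeats 1000000 in
/-- for the accelerated gradient method, the energy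
`𝒱_w^(k) = (A_k/2)(g(x^(k)) − g(w)) + ‖z^(k) + (A_k/4)p⋆ − w‖²` satisfies
`𝒱_w^(k+1) − 𝒱_w^(k) ≤ −(A_k(A_{k+1}−A_k)/8)⟪∇g(y^(k)), p⋆⟫ ≤ 0`. -/
theorem stmt16 {n : ℕ} (hn : 1 ≤ n) (L : ℝ) (hL : 0 < L)
    (f : EuclideanSpace ℝ (Fin n) → ℝ) (hf : LSmoothConvex L f)
    (A : ℕ → ℝ) (hA0 : A 0 = 0) (hAmono : ∀ k, A k < A (k + 1))
    (hAstep : ∀ k, L * (A (k + 1) - A k) ^ 2 ≤ 4 * A (k + 1))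
    (x₀ : EuclideanSpace ℝ (Fin n))
    (x y z : ℕ → EuclideanSpace ℝ (Fin n))
    (hx0 : x 0 = x₀) (hz0 : z 0 = x₀)
    (hy : ∀ k, y k = x k + ((A (k + 1) - A k) / A (k + 1)) • (z k - x k))
    (hzs : ∀ k, z (k + 1) = z k - ((A (k + 1) - A k) / 4) • gradient f (y k))
    (hxs : ∀ k, x (k + 1) =
      (A k / A (k + 1)) • x k + ((A (k + 1) - A k) / A (k + 1)) • z (k + 1))
    (pstar : EuclideanSpace ℝ (Fin n))
    (hps : pstar ∈ closure (fconjDom f))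
    (hmin : ∀ q ∈ closure (fconjDom f), ‖pstar‖ ≤ ‖q‖)
    (w : EuclideanSpace ℝ (Fin n)) :
    ∀ k : ℕ,
      (((A (k + 1) / 2) *
          ((f (x (k + 1)) - ⟪pstar, x (k + 1)⟫_ℝ) - (f w - ⟪pstar, w⟫_ℝ)) +
        ‖z (k + 1) + (A (k + 1) / 4) • pstar - w‖ ^ 2) -
       ((A k / 2) * ((f (x k) - ⟪pstar, x k⟫_ℝ) - (f w - ⟪pstar, w⟫_ℝ)) +
        ‖z k + (A k / 4) • pstar - w‖ ^ 2) ≤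
        -(A k * (A (k + 1) - A k) / 8) *
          ⟪gradient (fun v => f v - ⟪pstar, v⟫_ℝ) (y k), pstar⟫_ℝ) ∧
      -(A k * (A (k + 1) - A k) / 8) *
          ⟪gradient (fun v => f v - ⟪pstar, v⟫_ℝ) (y k), pstar⟫_ℝ ≤ 0 := by
  obtain ⟨hconv, hd, hlipW⟩ := hf
  have hlip : ∀ p q : EuclideanSpace ℝ (Fin n),
      ‖gradient f p - gradient f q‖ ≤ L * ‖p - q‖ := by
    intro p q
    have h := hlipW.dist_le_mul p q
    rw [dist_eq_norm, dist_eq_norm] at h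
    rwa [Real.coe_toNNReal _ hL.le] at h
  have hAnn : ∀ k, 0 ≤ A k := by
    intro k
    induction k with
    | zero => rw [hA0]
    | succ m ih => exact (ih.trans_lt (hAmono m)).le
  intro k
  have hAk : 0 ≤ A k := hAnn k
  have hA' : 0 < A (k + 1) := (hAnn k).trans_lt (hAmono k)
  have hA'ne : A (k + 1) ≠ 0 := hA'.ne'
  have ha : 0 < A (k + 1) - A k := sub_pos.2 (hAmono k)
  -- gradient of g
  rw [gradient_sub_inner hd pstar (y k)]
  -- variational inequalities
  have hVIy : 0 ≤ ⟪gradient f (y k) - pstar, pstar⟫_ℝ :=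
    min_norm_vi hps hmin (subset_closure (grad_mem_fconjDom hconv hd (y k)))
  have hVIx : 0 ≤ ⟪gradient f (x (k + 1)) - pstar, pstar⟫_ℝ :=
    min_norm_vi hps hmin (subset_closure (grad_mem_fconjDom hconv hd (x (k + 1))))
  constructor
  swap
  · -- second conjunct
    have h8 : 0 ≤ A k * (A (k + 1) - A k) / 8 := by positivity
    have := mul_nonneg h8 hVIy
    linarith
  -- main inequality
  -- key vector identities
  have hXv : x (k + 1) = y k -
      (((A (k + 1) - A k) ^ 2) / (4 * A (k + 1))) • gradient f (y k) := by
    rw [hxs k, hzs k, hy k]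
    match_scalars <;> field_simp <;> ring
  have hYv : A (k + 1) • y k = A k • x k + (A (k + 1) - A k) • z k := by
    rw [hy k]
    match_scalars <;> field_simp <;> ring
  set c : ℝ := ((A (k + 1) - A k) ^ 2) / (4 * A (k + 1)) with hcdef
  have hc : 0 < c := by positivity
  have hLc : L * c ≤ 1 := by
    rw [hcdef, ← mul_div_assoc, div_le_one (by positivity)]
    exact hAstep k
  set u : EuclideanSpace ℝ (Fin n) :=
    y k - c • (gradient f (y k) - pstar) with hu
  have huy : u - y k = -(c • (gradient f (y k) - pstar)) := by rw [hu]; module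
  have hx'u : x (k + 1) = u - c • pstar := by rw [hu, hXv]; module
  have hux : u - x (k + 1) = c • pstar := by rw [hx'u]; module
  set NG : ℝ := ‖gradient f (y k) - pstar‖ ^ 2 with hNG
  have hNGn : 0 ≤ NG := by positivity
  -- descent step
  have d1 := descent_lemma hd hL.le hlip (y k) u
  rw [huy, inner_neg_right, real_inner_smul_right, norm_neg, smul_norm_sq'] at d1
  rw [inner_sub_right] at d1
  -- ⟪pstar, u⟫ expansion
  have hPu : ⟪pstar, u⟫_ℝ = ⟪pstar, y k⟫_ℝ - c * (⟪pstar, gradient f (y k)⟫_ℝ -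
      ⟪pstar, pstar⟫_ℝ) := by
    rw [hu]
    simp only [inner_sub_right, real_inner_smul_right]
  -- g u ≤ g (y k) - (c/2)*NG
  have hgu : f u - ⟪pstar, u⟫_ℝ ≤ (f (y k) - ⟪pstar, y k⟫_ℝ) - c / 2 * NG := by
    have hexp : NG = ‖gradient f (y k)‖ ^ 2 - 2 * ⟪gradient f (y k), pstar⟫_ℝ +
        ‖pstar‖ ^ 2 := by rw [hNG, norm_sub_sq_real]
    have hcomm : ⟪pstar, gradient f (y k)⟫_ℝ = ⟪gradient f (y k), pstar⟫_ℝ :=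
      real_inner_comm _ _
    have hself : ⟪pstar, pstar⟫_ℝ = ‖pstar‖ ^ 2 := real_inner_self_eq_norm_sq _
    have hselfg : ⟪gradient f (y k), gradient f (y k)⟫_ℝ = ‖gradient f (y k)‖ ^ 2 :=
      real_inner_self_eq_norm_sq _
    have hprod : 0 ≤ c * NG * (1 - L * c) :=
      mul_nonneg (mul_nonneg hc.le hNGn) (by linarith)
    have hexpc : c * NG = c * (‖gradient f (y k)‖ ^ 2 -
        2 * ⟪gradient f (y k), pstar⟫_ℝ + ‖pstar‖ ^ 2) := by rw [hexp]
    have hcommc : c * ⟪pstar, gradient f (y k)⟫_ℝ = c * ⟪gradient f (y k), pstar⟫_ℝ := by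
      rw [hcomm]
    have hselfc : c * ⟪pstar, pstar⟫_ℝ = c * ‖pstar‖ ^ 2 := by rw [hself]
    have hselfgc : c * ⟪gradient f (y k), gradient f (y k)⟫_ℝ =
        c * ‖gradient f (y k)‖ ^ 2 := by rw [hselfg]
    have h5 : L * c ^ 2 * ‖gradient f (y k) - pstar‖ ^ 2 = L * c ^ 2 * NG := by rw [hNG]
    linarith [d1, hPu, hprod, hexpc, hcommc, hselfc, hselfgc, h5]
  -- g (x (k+1)) ≤ g u
  have hgx' : f (x (k + 1)) - ⟪pstar, x (k + 1)⟫_ℝ ≤ f u - ⟪pstar, u⟫_ℝ := by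
    have h := convex_grad_ineq hconv hd (x (k + 1)) u
    rw [hux, real_inner_smul_right] at h
    have hPx' : ⟪pstar, x (k + 1)⟫_ℝ = ⟪pstar, u⟫_ℝ - c * ⟪pstar, pstar⟫_ℝ := by
      rw [hx'u]
      simp only [inner_sub_right, real_inner_smul_right]
    rw [inner_sub_left] at hVIx
    have hvp : 0 ≤ c * (⟪gradient f (x (k + 1)), pstar⟫_ℝ - ⟪pstar, pstar⟫_ℝ) :=
      mul_nonneg hc.le hVIx
    linarith [h, hPx', hvp]
  have hchain := hgx'.trans hgu
  have hscaled : A (k + 1) * (f (x (k + 1)) - ⟪pstar, x (k + 1)⟫_ℝ) ≤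
      A (k + 1) * (f (y k) - ⟪pstar, y k⟫_ℝ) - (A (k + 1) - A k) ^ 2 / 8 * NG := by
    have h := mul_le_mul_of_nonneg_left hchain hA'.le
    have hid : A (k + 1) * (c / 2) = (A (k + 1) - A k) ^ 2 / 8 := by
      rw [hcdef]; field_simp; ring
    have hidNG : A (k + 1) * (c / 2) * NG = (A (k + 1) - A k) ^ 2 / 8 * NG := by rw [hid]
    nlinarith [h, hidNG]
  -- convexity at y k versus x k and w
  have c1 := convex_grad_ineq hconv hd (y k) (x k)
  have c2 := convex_grad_ineq hconv hd (y k) w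
  rw [inner_sub_right] at c1 c2
  have t1 := mul_le_mul_of_nonneg_left c1 hAk
  have t2 := mul_le_mul_of_nonneg_left c2 ha.le
  -- inner products of hYv
  have hYg := congrArg (fun v => ⟪gradient f (y k), v⟫_ℝ) hYv
  have hYp := congrArg (fun v => ⟪pstar, v⟫_ℝ) hYv
  simp only [inner_add_right, real_inner_smul_right] at hYg hYp
  -- norm expansion
  have hvec : z (k + 1) + (A (k + 1) / 4) • pstar - w =
      (z k + (A k / 4) • pstar - w) -
        ((A (k + 1) - A k) / 4) • (gradient f (y k) - pstar) := by
    rw [hzs k]; module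
  rw [hvec, norm_sub_sq_real, smul_norm_sq']
  simp only [inner_smul_right, inner_sub_left, inner_add_left, inner_sub_right,
    real_inner_smul_left, inner_sub_left]
  rw [← hNG]
  have e1 : ⟪z k, gradient f (y k)⟫_ℝ = ⟪gradient f (y k), z k⟫_ℝ := real_inner_comm _ _
  have e2 : ⟪z k, pstar⟫_ℝ = ⟪pstar, z k⟫_ℝ := real_inner_comm _ _
  have e3 : ⟪w, gradient f (y k)⟫_ℝ = ⟪gradient f (y k), w⟫_ℝ := real_inner_comm _ _
  have e4 : ⟪w, pstar⟫_ℝ = ⟪pstar, w⟫_ℝ := real_inner_comm _ _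
  have e5 : ⟪pstar, gradient f (y k)⟫_ℝ = ⟪gradient f (y k), pstar⟫_ℝ :=
    real_inner_comm _ _
  have ea1 : (A (k + 1) - A k) * ⟪z k, gradient f (y k)⟫_ℝ =
      (A (k + 1) - A k) * ⟪gradient f (y k), z k⟫_ℝ := by rw [e1]
  have ea2 : (A (k + 1) - A k) * ⟪z k, pstar⟫_ℝ =
      (A (k + 1) - A k) * ⟪pstar, z k⟫_ℝ := by rw [e2]
  have ea3 : (A (k + 1) - A k) * ⟪w, gradient f (y k)⟫_ℝ =
      (A (k + 1) - A k) * ⟪gradient f (y k), w⟫_ℝ := by rw [e3]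
  have ea4 : (A (k + 1) - A k) * ⟪w, pstar⟫_ℝ =
      (A (k + 1) - A k) * ⟪pstar, w⟫_ℝ := by rw [e4]
  have ea5 : A k * (A (k + 1) - A k) * ⟪pstar, gradient f (y k)⟫_ℝ =
      A k * (A (k + 1) - A k) * ⟪gradient f (y k), pstar⟫_ℝ := by rw [e5]
  linarith [t1, t2, hYg, hYp, hscaled, ea1, ea2, ea3, ea4, ea5]
end
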